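/- Let A be a type and let α, β, γ, δ be setoids on A forming a diamond M3 with bottom ⊥, and assume the 3-permutability condition γ ⊔ β = γ∘β∘γ. Form the duplication A(γ) over γ. Then Jónsson's splitting inequality for M₃,₃ fails in Setoid (A(γ)) under the substitution x ↦ α₀ ⊓ β₁, y ↦ α₀ ⊓ α₁, z ↦ β₀, w ↦ γ₀; that is, (α₀ ⊓ β₁) ⊓ ((α₀ ⊓ α₁) ⊔ (β₀ ⊓ γ₀)) ⊓ (β₀ ⊔ γ₀) ≰ (α₀ ⊓ α₁) ⊔ ((α₀ ⊓ β₁) ⊓ β₀) ⊔ ((α₀ ⊓ β₁) ⊓ γ₀). -/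

import Mathlib

/-! Common setup: the lattice `Setoid A` of equivalence relations on `A`,
the duplication `Dup β = {p : A × A // β p.1 p.2}`, the lifted setoids
`lift0 β θ = θ₀`, `lift1 β θ = θ₁`, the projection kernels `ker0 β = η₀`,
`ker1 β = η₁`, and relational composition `rc`. -/

variable {A : Type*}

/-- The duplication `A(β)`. -/
def Dup (β : Setoid A) : Type _ := {p : A × A // β.r p.1 p.2}

/-- `θ₀`: relate two elements of `A(β)` iff `θ` relates their first coordinates. -/
def lift0 (β θ : Setoid A) : Setoid (Dup β) :=
  ⟨fun x y => θ.r x.1.1 y.1.1,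
   ⟨fun _ => θ.refl' _, fun h => θ.symm' h, fun h h' => θ.trans' h h'⟩⟩

/-- `θ₁`: relate two elements of `A(β)` iff `θ` relates their second coordinates. -/
def lift1 (β θ : Setoid A) : Setoid (Dup β) :=
  ⟨fun x y => θ.r x.1.2 y.1.2,
   ⟨fun _ => θ.refl' _, fun h => θ.symm' h, fun h h' => θ.trans' h h'⟩⟩

/-- `η₀`: kernel of the first projection. -/
def ker0 (β : Setoid A) : Setoid (Dup β) :=
  ⟨fun x y => x.1.1 = y.1.1, ⟨fun _ => rfl, Eq.symm, Eq.trans⟩⟩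

/-- `η₁`: kernel of the second projection. -/
def ker1 (β : Setoid A) : Setoid (Dup β) :=
  ⟨fun x y => x.1.2 = y.1.2, ⟨fun _ => rfl, Eq.symm, Eq.trans⟩⟩

/-- Relational composition. -/
def rc {B : Type*} (r s : B → B → Prop) : B → B → Prop :=
  fun a b => ∃ c, r a c ∧ s c b

/-- `α, β, γ, δ` form a diamond `M₃` with bottom `⊥` in `Setoid A`. -/
def IsM3 (α β γ δ : Setoid A) : Prop :=
  α ⊓ β = ⊥ ∧ α ⊓ γ = ⊥ ∧ β ⊓ γ = ⊥ ∧
  α ⊔ β = δ ∧ α ⊔ γ = δ ∧ β ⊔ γ = δ ∧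
  α ≠ β ∧ α ≠ γ ∧ β ≠ γ ∧
  α ≠ ⊥ ∧ β ≠ ⊥ ∧ γ ≠ ⊥ ∧ α ≠ δ ∧ β ≠ δ ∧ γ ≠ δ

/-!
Under the `M₃` conditions both meets `α₀ ⊓ β₁ ⊓ β₀` and `α₀ ⊓ β₁ ⊓ γ₀` vanish: `α₀ ⊓ β₀` and
`α₀ ⊓ γ₀` lie in `η₀`, and `η₀ ⊓ β₁ = ⊥` since `β ⊓ γ = ⊥`. So the right side is `α₀ ⊓ α₁`.
Since every element of `A(γ)` is `η₀`-related to a diagonal one, `α₀` lies below both joins on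
the left, which is therefore `α₀ ⊓ β₁`. But `α₀ ⊓ β₁ ≰ α₁`: by 3-permutability a pair `c ≠ d` in
`α` factors as `c γ p β q γ d`, and `(c, p), (d, q)` are `α₀ ⊓ β₁`-related but not `α₁`-related.
-/

namespace Setoid

variable {B : Type*} {r s : Setoid B}

theorem eq_of_rel_of_inf_eq_bot (h : r ⊓ s = ⊥) {a b : B} (hr : r a b) (hs : s a b) : a = b := by
  have : (r ⊓ s) a b := inf_iff_and.2 ⟨hr, hs⟩
  rwa [h, bot_def] at this

theorem exists_rel_ne_of_ne_bot (h : r ≠ ⊥) : ∃ a b, r a b ∧ a ≠ b := by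
  by_contra! H
  exact h (le_bot_iff.1 fun a b hab => H a b hab)

end Setoid

def Dup.diag (ε : Setoid A) (a : A) : Dup ε := ⟨(a, a), ε.refl' a⟩

section Lift

variable {ε θ θ' : Setoid A}

theorem lift0_mono (h : θ ≤ θ') : lift0 ε θ ≤ lift0 ε θ' := fun _ _ hxy => h hxy

theorem lift0_inf : lift0 ε (θ ⊓ θ') = lift0 ε θ ⊓ lift0 ε θ' := rfl

theorem lift0_bot : lift0 ε ⊥ = ker0 ε := rfl

theorem ker0_le_lift0 : ker0 ε ≤ lift0 ε θ :=
  fun x y (h : x.1.1 = y.1.1) => show θ x.1.1 y.1.1 from h ▸ θ.refl' _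

theorem ker0_inf_lift1_eq_bot (h : θ ⊓ ε = ⊥) : ker0 ε ⊓ lift1 ε θ = ⊥ := by
  refine le_bot_iff.1 fun x y hxy => ?_
  obtain ⟨h0, h1⟩ := Setoid.inf_iff_and.1 hxy
  have h2 : ε x.1.2 y.1.2 := ε.trans' (ε.symm' x.2) (h0 ▸ y.2)
  exact Subtype.ext (Prod.ext h0 (Setoid.eq_of_rel_of_inf_eq_bot h h1 h2))

theorem lift0_inf_lift1_inf_lift0_eq_bot {α : Setoid A} (hα : α ⊓ θ' = ⊥) (h : θ ⊓ ε = ⊥) :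
    lift0 ε α ⊓ lift1 ε θ ⊓ lift0 ε θ' = ⊥ := by
  rw [inf_right_comm, ← lift0_inf, hα, lift0_bot]
  exact ker0_inf_lift1_eq_bot h

theorem lift0_le_sup_ker0 {s : Setoid (Dup ε)}
    (hs : ∀ a b, θ a b → s (Dup.diag ε a) (Dup.diag ε b)) : lift0 ε θ ≤ s ⊔ ker0 ε := by
  intro x y (hxy : θ x.1.1 y.1.1)
  have hx : ker0 ε x (Dup.diag ε x.1.1) := rfl
  have hy : ker0 ε (Dup.diag ε y.1.1) y := rfl
  exact (s ⊔ ker0 ε).trans' ((le_sup_right : ker0 ε ≤ _) hx)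
    ((s ⊔ ker0 ε).trans' ((le_sup_left : s ≤ _) (hs _ _ hxy)) ((le_sup_right : ker0 ε ≤ _) hy))

theorem lift0_le_lift0_inf_lift1_sup_ker0 :
    lift0 ε θ ≤ (lift0 ε θ ⊓ lift1 ε θ) ⊔ ker0 ε :=
  lift0_le_sup_ker0 fun _ _ h => Setoid.inf_iff_and.2 ⟨h, h⟩

theorem lift0_sup : lift0 ε (θ ⊔ θ') = lift0 ε θ ⊔ lift0 ε θ' := by
  refine le_antisymm ?_ (sup_le (lift0_mono le_sup_left) (lift0_mono le_sup_right))
  have hdiag : θ ⊔ θ' ≤ (lift0 ε θ ⊔ lift0 ε θ').comap (Dup.diag ε) :=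
    sup_le (fun _ _ h => (le_sup_left : lift0 ε θ ≤ _) h)
      (fun _ _ h => (le_sup_right : lift0 ε θ' ≤ _) h)
  refine (lift0_le_sup_ker0 fun a b h => hdiag h).trans (sup_le le_rfl ?_)
  exact ker0_le_lift0.trans le_sup_left

end Lift

section Splitting

variable {α β γ : Setoid A}

theorem splitting_lhs_eq (hα : α ≤ β ⊔ γ) :
    (lift0 γ α ⊓ lift1 γ β) ⊓ ((lift0 γ α ⊓ lift1 γ α) ⊔ (lift0 γ β ⊓ lift0 γ γ)) ⊓
      (lift0 γ β ⊔ lift0 γ γ) = lift0 γ α ⊓ lift1 γ β := by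
  have hmid : lift0 γ α ≤ (lift0 γ α ⊓ lift1 γ α) ⊔ (lift0 γ β ⊓ lift0 γ γ) :=
    lift0_le_lift0_inf_lift1_sup_ker0.trans
      (sup_le_sup_left (le_inf ker0_le_lift0 ker0_le_lift0) _)
  have hjoin : lift0 γ α ≤ lift0 γ β ⊔ lift0 γ γ := lift0_sup (ε := γ) ▸ lift0_mono hα
  exact le_antisymm (inf_le_left.trans inf_le_left)
    (le_inf (le_inf le_rfl (inf_le_left.trans hmid)) (inf_le_left.trans hjoin))

theorem splitting_rhs_eq (hαβ : α ⊓ β = ⊥) (hαγ : α ⊓ γ = ⊥) (hβγ : β ⊓ γ = ⊥) :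
    (lift0 γ α ⊓ lift1 γ α) ⊔ ((lift0 γ α ⊓ lift1 γ β) ⊓ lift0 γ β) ⊔
      ((lift0 γ α ⊓ lift1 γ β) ⊓ lift0 γ γ) = lift0 γ α ⊓ lift1 γ α := by
  rw [lift0_inf_lift1_inf_lift0_eq_bot hαβ hβγ, lift0_inf_lift1_inf_lift0_eq_bot hαγ hβγ,
    sup_bot_eq, sup_bot_eq]

theorem eq_bot_of_lift0_inf_lift1_le_lift1 (h3 : (γ ⊔ β).r = rc γ.r (rc β.r γ.r))
    (hαβ : α ⊓ β = ⊥) (hαγ : α ⊓ γ = ⊥) (hα : α ≤ γ ⊔ β)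
    (H : lift0 γ α ⊓ lift1 γ β ≤ lift1 γ α) : α = ⊥ := by
  by_contra hne
  obtain ⟨c, d, hcd, hcd_ne⟩ := Setoid.exists_rel_ne_of_ne_bot hne
  obtain ⟨p, hcp, q, hpq, hqd⟩ : rc γ.r (rc β.r γ.r) c d := h3 ▸ hα hcd
  have hαpq : α p q :=
    H (x := ⟨(c, p), hcp⟩) (y := ⟨(d, q), γ.symm' hqd⟩) (Setoid.inf_iff_and.2 ⟨hcd, hpq⟩)
  have hp_eq_q : p = q := Setoid.eq_of_rel_of_inf_eq_bot hαβ hαpq hpq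
  exact hcd_ne (Setoid.eq_of_rel_of_inf_eq_bot hαγ hcd (γ.trans' hcp (hp_eq_q ▸ hqd)))

end Splitting

/-- failure of Jónsson's splitting inequality for `M₃,₃`. -/
theorem jonsson_splitting_fails (α β γ δ : Setoid A) (h : IsM3 α β γ δ)
    (h3 : (γ ⊔ β).r = rc γ.r (rc β.r γ.r)) :
    ¬ ((lift0 γ α ⊓ lift1 γ β) ⊓ ((lift0 γ α ⊓ lift1 γ α) ⊔ (lift0 γ β ⊓ lift0 γ γ)) ⊓
        (lift0 γ β ⊔ lift0 γ γ) ≤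
      (lift0 γ α ⊓ lift1 γ α) ⊔ ((lift0 γ α ⊓ lift1 γ β) ⊓ lift0 γ β) ⊔
        ((lift0 γ α ⊓ lift1 γ β) ⊓ lift0 γ γ)) := by
  obtain ⟨hαβ, hαγ, hβγ, hαβδ, -, hβγδ, -, -, -, hα_ne, -⟩ := h
  have hα_le : α ≤ β ⊔ γ := hβγδ ▸ hαβδ ▸ le_sup_left
  rw [splitting_lhs_eq hα_le, splitting_rhs_eq hαβ hαγ hβγ]
  intro H
  exact hα_ne (eq_bot_of_lift0_inf_lift1_le_lift1 h3 hαβ hαγ (sup_comm β γ ▸ hα_le)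
    (H.trans inf_le_right))
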